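/- Let 1<p<2, β∈(0,p−1), η>0, x∈ℝ^d and 0<R<1, and let φ∈C⁴_b(B_R(x)). Then there exists a constant C>0, depending only on p, β, d and ‖φ‖_{C⁴_b(B_R(x))}, such that for every y∈B_{R/2}(0)∖{0} with |∇φ(x)·y| ≥ η, one has |D_y[φ](x) − (p−1)|y|^{−p} |∇φ(x)·y|^{p−2} ⟨D²φ(x)y, y⟩| ≤ C Φ(x,y,φ) |y|^β, where, writing ŷ := y/|y|, Φ(x,y,φ) := |∇φ(x)·ŷ + |y| ⟨D²φ(x)ŷ, ŷ⟩|^{p−2−β} + |∇φ(x)·ŷ|^{p−2−β}. -/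

import Mathlib

open MeasureTheory Metric Filter
open scoped Topology RealInnerProductSpace MeasureTheory NNReal

noncomputable section
set_option maxHeartbeats 1600000

abbrev Euc (d : ℕ) := EuclideanSpace ℝ (Fin d)

/-- `J_p(ξ) = |ξ|^{p-2} ξ`. -/
def Jp (p ξ : ℝ) : ℝ := |ξ| ^ (p - 2) * ξ

/-- Second derivative of `φ` at `x` as a bilinear form: `⟨D²φ(x) v, w⟩`. -/
def D2 {d : ℕ} (φ : Euc d → ℝ) (x v w : Euc d) : ℝ := iteratedFDeriv ℝ 2 φ x ![v, w]

/-- The `p`-Laplacian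
`Δ_pφ(x) = |∇φ(x)|^{p−2}Δφ(x) + (p−2)|∇φ(x)|^{p−4}⟨D²φ(x)∇φ(x),∇φ(x)⟩`
(with the junk-value conventions of `Real.rpow`, this is `0` when `∇φ(x) = 0` and `p > 2`). -/
def pLap {d : ℕ} (p : ℝ) (φ : Euc d → ℝ) (x : Euc d) : ℝ :=
  ‖gradient φ x‖ ^ (p - 2) *
      (∑ i : Fin d, D2 φ x (EuclideanSpace.single i 1) (EuclideanSpace.single i 1)) +
    (p - 2) * ‖gradient φ x‖ ^ (p - 4) * D2 φ x (gradient φ x) (gradient φ x)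

/-- `φ ∈ C⁴_b(s)` with `‖φ‖_{C⁴_b(s)} ≤ M`: `φ` is `C⁴` on `s` with all derivatives
up to order `4` bounded by `M`. -/
def C4bOn {d : ℕ} (φ : Euc d → ℝ) (s : Set (Euc d)) (M : ℝ) : Prop :=
  ContDiffOn ℝ 4 φ s ∧ ∀ k : ℕ, k ≤ 4 → ∀ y ∈ s, ‖iteratedFDerivWithin ℝ k φ s y‖ ≤ M

/-- The surface measure on spheres in `ℝ^d`: the `(d−1)`-dimensional Hausdorff measure. -/
def sphMeas (d : ℕ) : Measure (Euc d) := μH[(d : ℝ) - 1]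

/-- Euclidean inner product, as a real number. -/
def innP {d : ℕ} (v w : Euc d) : ℝ := ⟪v, w⟫

/-- `D_y[φ](x) = (J_p(φ(x+y)−φ(x)) + J_p(φ(x−y)−φ(x)))/|y|^p`. -/
def DyOp {d : ℕ} (p : ℝ) (φ : Euc d → ℝ) (x y : Euc d) : ℝ :=
  (Jp p (φ (x + y) - φ x) + Jp p (φ (x - y) - φ x)) / ‖y‖ ^ p

lemma jp_odd (p ξ : ℝ) : Jp p (-ξ) = - Jp p ξ := by
  simp [Jp, abs_neg]

lemma abs_jp_le {p : ℝ} (hp : 1 < p) (ξ : ℝ) : |Jp p ξ| ≤ |ξ| ^ (p - 1) := by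
  rcases eq_or_ne ξ 0 with h | h
  · simp [Jp, h, Real.zero_rpow (by linarith : p - 1 ≠ 0)]
  · have h0 : |ξ| ≠ 0 := abs_ne_zero.2 h
    have : |Jp p ξ| = |ξ| ^ (p - 2) * |ξ| := by
      rw [Jp, abs_mul, abs_of_nonneg (Real.rpow_nonneg (abs_nonneg ξ) _)]
    rw [this, ← Real.rpow_add_one h0]
    ring_nf
    exact le_rfl

lemma hasDerivAt_jp {p u : ℝ} (hu : 0 < u) :
    HasDerivAt (Jp p) ((p - 1) * u ^ (p - 2)) u := by
  have h1 : HasDerivAt (fun t : ℝ => t ^ (p - 2) * t)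
      ((p - 2) * u ^ (p - 2 - 1) * u + u ^ (p - 2) * 1) u :=
    (Real.hasDerivAt_rpow_const (Or.inl hu.ne')).mul (hasDerivAt_id u)
  have h2 : (p - 2) * u ^ (p - 2 - 1) * u + u ^ (p - 2) * 1 = (p - 1) * u ^ (p - 2) := by
    have h3 : u ^ (p - 2 - 1) * u = u ^ (p - 2) := by
      rw [← Real.rpow_add_one hu.ne']; ring_nf
    rw [mul_assoc, h3]; ring
  rw [h2] at h1
  apply h1.congr_of_eventuallyEq
  filter_upwards [eventually_gt_nhds hu] with t ht
  rw [Jp, abs_of_pos ht]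

lemma two_rpow_le {e c : ℝ} (hc : e ≤ c) : (2:ℝ) ^ e ≤ (2:ℝ) ^ c :=
  Real.rpow_le_rpow_of_exponent_le (by norm_num) hc

lemma two_rpow_nat (n : ℕ) : (2:ℝ) ^ ((n:ℝ)) = (2:ℝ) ^ n := Real.rpow_natCast 2 n

lemma rpow_div_two_le {A e c : ℝ} (hA : 0 < A) (hc : (2:ℝ) ^ (-e) ≤ c) :
    (A / 2) ^ e ≤ c * A ^ e := by
  have h2 : (A/2) ^ e = A ^ e * ((2:ℝ) ^ e)⁻¹ := by
    rw [show A/2 = A * (2:ℝ)⁻¹ by ring, Real.mul_rpow hA.le (by norm_num),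
      Real.inv_rpow (by norm_num)]
  have h3 : ((2:ℝ) ^ e)⁻¹ = (2:ℝ) ^ (-e) := by
    rw [← Real.rpow_neg (by norm_num)]
  rw [h2, h3]
  have h4 : (0:ℝ) ≤ A ^ e := Real.rpow_nonneg hA.le e
  nlinarith

/-- Bound `|s'| ^ e ≤ c * A ^ e` when `A/2 ≤ |s'|`, for `e ≤ 0`. -/
lemma rpow_ge_half_le {A s' e c : ℝ} (hA : 0 < A) (hs : A / 2 ≤ |s'|) (he : e ≤ 0)
    (hc : (2:ℝ) ^ (-e) ≤ c) : |s'| ^ e ≤ c * A ^ e :=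
  le_trans (Real.rpow_le_rpow_of_nonpos (by linarith) hs he) (rpow_div_two_le hA hc)

lemma abs_six {x1 x2 x3 x4 x5 x6 : ℝ} :
    |x1 + x2 - (x3 + x4) + x5 - x6| ≤ |x1| + |x2| + |x3| + |x4| + |x5| + |x6| := by
  refine abs_le.2 ⟨?_, ?_⟩ <;>
    [skip; skip] <;>
    nlinarith [neg_abs_le x1, le_abs_self x1, neg_abs_le x2, le_abs_self x2,
      neg_abs_le x3, le_abs_self x3, neg_abs_le x4, le_abs_self x4,
      neg_abs_le x5, le_abs_self x5, neg_abs_le x6, le_abs_self x6]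

lemma abs_three {x1 x2 x3 : ℝ} : |x1 + x2 - x3| ≤ |x1| + |x2| + |x3| := by
  refine abs_le.2 ⟨?_, ?_⟩ <;>
    nlinarith [neg_abs_le x1, le_abs_self x1, neg_abs_le x2, le_abs_self x2,
      neg_abs_le x3, le_abs_self x3]

lemma rpow_sq_mul {r : ℝ} (hr0 : 0 < r) (e : ℝ) : ((r ^ 2 : ℝ)) ^ e = r ^ (2 * e) := by
  rw [← Real.rpow_natCast r 2, ← Real.rpow_mul hr0.le]
  norm_num


lemma L1pos {p s t : ℝ} (hp1 : 1 < p) (hp2 : p < 2) (hs : 0 < s) (ht : |t| ≤ s / 2) :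
    |Jp p (s + t) - Jp p s - (p - 1) * s ^ (p - 2) * t| ≤ 4 * s ^ (p - 3) * t ^ 2 := by
  set I : Set ℝ := Set.Icc (s - |t|) (s + |t|) with hI
  have habs := abs_nonneg t
  have hmem : ∀ u ∈ I, s / 2 ≤ u := by
    rintro u ⟨h1, _⟩; linarith
  have hupos : ∀ u ∈ I, 0 < u := fun u hu => lt_of_lt_of_le (by linarith) (hmem u hu)
  have hsI : s ∈ I := ⟨by linarith, by linarith⟩
  have hstI : s + t ∈ I := ⟨by cases abs_cases t with
      | inl h => linarith [h.1] | inr h => linarith [h.1],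
    by cases abs_cases t with
      | inl h => linarith [h.1] | inr h => linarith [h.1]⟩
  have hhalf : (0:ℝ) < s / 2 := by linarith
  -- inner MVT for v ↦ v ^ (p-2)
  have inner : ∀ u ∈ I, |u ^ (p-2) - s ^ (p-2)| ≤ ((2-p) * (s/2) ^ (p-3)) * |t| := by
    intro u hu
    have hbd : ∀ v ∈ I, ‖(p - 2) * v ^ (p - 2 - 1)‖ ≤ (2-p) * (s/2) ^ (p-3) := by
      intro v hv
      have hv0 := hupos v hv
      have : v ^ (p - 2 - 1) ≤ (s/2) ^ (p - 3) := by
        rw [show p - 2 - 1 = p - 3 by ring]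
        exact Real.rpow_le_rpow_of_nonpos hhalf (hmem v hv) (by linarith)
      rw [Real.norm_eq_abs, abs_mul, abs_of_nonpos (by linarith : p - 2 ≤ 0),
        abs_of_nonneg (Real.rpow_nonneg hv0.le _)]
      have h2 : (0:ℝ) ≤ 2 - p := by linarith
      nlinarith [Real.rpow_nonneg (le_of_lt hv0) (p - 2 - 1)]
    have hder : ∀ v ∈ I, HasDerivWithinAt (fun w : ℝ => w ^ (p-2))
        ((p - 2) * v ^ (p - 2 - 1)) I v := fun v hv =>
      (Real.hasDerivAt_rpow_const (Or.inl (hupos v hv).ne')).hasDerivWithinAt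
    have := Convex.norm_image_sub_le_of_norm_hasDerivWithin_le hder hbd
      (convex_Icc _ _) hsI hu
    have hus : ‖u - s‖ ≤ |t| := by
      rw [Real.norm_eq_abs, abs_sub_le_iff]
      exact ⟨by linarith [hu.2], by linarith [hu.1]⟩
    calc |u ^ (p-2) - s ^ (p-2)| ≤ ((2-p) * (s/2) ^ (p-3)) * ‖u - s‖ := by
          simpa [Real.norm_eq_abs] using this
      _ ≤ ((2-p) * (s/2) ^ (p-3)) * |t| := by
          apply mul_le_mul_of_nonneg_left hus
          have := Real.rpow_nonneg hhalf.le (p-3)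
          nlinarith
  -- outer MVT for f = Jp - linear
  have hder2 : ∀ u ∈ I, HasDerivWithinAt (fun w : ℝ => Jp p w - (p - 1) * s ^ (p-2) * w)
      ((p - 1) * (u ^ (p-2) - s ^ (p-2))) I u := by
    intro u hu
    have h := (hasDerivAt_jp (p := p) (hupos u hu)).sub
      ((hasDerivAt_id u).const_mul ((p - 1) * s ^ (p-2)))
    have : (p-1) * u ^ (p-2) - (p - 1) * s ^ (p-2) * 1 = (p-1) * (u ^ (p-2) - s ^ (p-2)) := by
      ring
    rw [this] at h
    exact h.hasDerivWithinAt
  have hbd2 : ∀ u ∈ I, ‖(p - 1) * (u ^ (p-2) - s ^ (p-2))‖ ≤ (s/2) ^ (p-3) * |t| := by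
    intro u hu
    rw [Real.norm_eq_abs, abs_mul, abs_of_nonneg (by linarith : (0:ℝ) ≤ p - 1)]
    calc (p-1) * |u ^ (p-2) - s ^ (p-2)| ≤ 1 * (((2-p) * (s/2) ^ (p-3)) * |t|) := by
          apply mul_le_mul (by linarith) (inner u hu) (abs_nonneg _) (by norm_num)
      _ ≤ (s/2) ^ (p-3) * |t| := by
          rw [one_mul]
          have : (0:ℝ) ≤ (s/2) ^ (p-3) := Real.rpow_nonneg hhalf.le _
          nlinarith [mul_nonneg (mul_nonneg (by linarith : (0:ℝ) ≤ p - 1) this) (abs_nonneg t)]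
  have key := Convex.norm_image_sub_le_of_norm_hasDerivWithin_le hder2 hbd2
    (convex_Icc _ _) hsI hstI
  have h24 : (s/2) ^ (p - 3) ≤ 4 * s ^ (p-3) := by
    have e1 : (s/2) ^ (p-3) = s ^ (p-3) * (1/2:ℝ) ^ (p-3) := by
      rw [show s/2 = s * (1/2 : ℝ) by ring, Real.mul_rpow hs.le (by norm_num)]
    have e2 : ((1:ℝ)/2) ^ (p-3) = ((2:ℝ) ^ (p-3))⁻¹ := by
      rw [show (1:ℝ)/2 = (2:ℝ)⁻¹ by norm_num, Real.inv_rpow (by norm_num)]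
    have e3 : ((2:ℝ):ℝ) ^ ((-2):ℝ) ≤ (2:ℝ) ^ (p - 3) :=
      Real.rpow_le_rpow_of_exponent_le (by norm_num) (by linarith)
    have e4 : ((2:ℝ)) ^ ((-2):ℝ) = (1/4 : ℝ) := by
      rw [show ((-2):ℝ) = ((-2 : ℤ) : ℝ) by norm_num, Real.rpow_intCast]
      norm_num
    have e5 : ((2:ℝ) ^ (p-3))⁻¹ ≤ 4 := by
      rw [e4] at e3
      have hpos : (0:ℝ) < (2:ℝ) ^ (p-3) := Real.rpow_pos_of_pos (by norm_num) _
      rw [inv_le_comm₀ hpos (by norm_num)]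
      linarith
    rw [e1, e2]
    have : (0:ℝ) ≤ s ^ (p-3) := Real.rpow_nonneg hs.le _
    nlinarith [Real.rpow_pos_of_pos (show (0:ℝ)<2 by norm_num) (p-3)]
  calc |Jp p (s + t) - Jp p s - (p - 1) * s ^ (p - 2) * t|
      = ‖(Jp p (s+t) - (p-1) * s ^ (p-2) * (s+t)) - (Jp p s - (p-1) * s ^ (p-2) * s)‖ := by
        rw [Real.norm_eq_abs]; ring_nf
    _ ≤ ((s/2) ^ (p-3) * |t|) * ‖(s + t) - s‖ := key
    _ = (s/2) ^ (p-3) * t ^ 2 := by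
        rw [Real.norm_eq_abs, show s + t - s = t by ring, mul_assoc, abs_mul_abs_self]
        ring
    _ ≤ 4 * s ^ (p-3) * t ^ 2 := by nlinarith [sq_nonneg t, Real.rpow_nonneg hhalf.le (p-3)]

lemma L1 {p s t : ℝ} (hp1 : 1 < p) (hp2 : p < 2) (hs : s ≠ 0) (ht : |t| ≤ |s| / 2) :
    |Jp p (s + t) - Jp p s - (p - 1) * |s| ^ (p - 2) * t| ≤ 4 * |s| ^ (p - 3) * t ^ 2 := by
  rcases hs.lt_or_gt with hneg | hpos
  · rw [abs_of_neg hneg] at ht ⊢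
    have h := L1pos (t := -t) hp1 hp2 (neg_pos.2 hneg) (by rwa [abs_neg])
    rw [show -s + -t = -(s + t) by ring, jp_odd, jp_odd] at h
    calc |Jp p (s + t) - Jp p s - (p - 1) * (-s) ^ (p - 2) * t|
        = |-Jp p (s+t) - -Jp p s - (p-1) * (-s) ^ (p-2) * (-t)| := by
          rw [show -Jp p (s+t) - -Jp p s - (p-1) * (-s) ^ (p-2) * (-t)
            = -(Jp p (s + t) - Jp p s - (p - 1) * (-s) ^ (p - 2) * t) by ring, abs_neg]
      _ ≤ 4 * (-s) ^ (p-3) * (-t) ^ 2 := h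
      _ = 4 * (-s) ^ (p-3) * t ^ 2 := by ring
  · rw [abs_of_pos hpos] at *
    exact L1pos hp1 hp2 hpos ht

lemma key {p β K r a Q t₁ t₂ : ℝ} (hp1 : 1 < p) (hp2 : p < 2)
    (hβ0 : 0 < β) (hβ1 : β < p - 1) (hK : 1 ≤ K) (hr0 : 0 < r) (hr1 : r < 1)
    (ha : a ≠ 0) (haK : |a| ≤ K * r) (hQK : |Q| ≤ K * r ^ 2)
    (ht1 : |t₁| ≤ K * r ^ 3) (ht2 : |t₂| ≤ K * r ^ 3) :
    |Jp p (a + Q / 2 + t₁) + Jp p (-(a - Q / 2 + t₂)) - (p - 1) * |a| ^ (p - 2) * Q| ≤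
      208 * K ^ 2 * ((|a + Q| ^ (p - 2 - β) + |a| ^ (p - 2 - β)) * r ^ (2 + 2 * β)) := by
  have ha' : 0 < |a| := abs_pos.2 ha
  have hβ1' : β < 1 := by linarith
  have hK0 : (0:ℝ) < K := by linarith
  have hr2 : (0:ℝ) < r ^ 2 := by positivity
  have hr3 : (0:ℝ) < r ^ 3 := by positivity
  have hrb : (0:ℝ) < r ^ (2 + 2*β) := Real.rpow_pos_of_pos hr0 _
  have haQnn : (0:ℝ) ≤ |a + Q| ^ (p - 2 - β) := Real.rpow_nonneg (abs_nonneg _) _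
  have hann : (0:ℝ) ≤ |a| ^ (p - 2 - β) := Real.rpow_nonneg (abs_nonneg _) _
  have hnn3 : (0:ℝ) ≤ |a| ^ (p-3) := Real.rpow_nonneg (abs_nonneg a) _
  have hnn2 : (0:ℝ) ≤ |a| ^ (p-2) := Real.rpow_nonneg (abs_nonneg a) _
  rcases le_or_gt (8 * K * r ^ 2) |a| with hcase | hcase
  · -- Case I : |a| ≥ 8 K r²
    set s₁ := a + Q / 2 with hs₁
    set s₂ := a - Q / 2 with hs₂
    have hr32 : r ^ 3 ≤ r ^ 2 := by
      have h := mul_nonneg (by linarith : (0:ℝ) ≤ 1 - r) (pow_pos hr0 2).le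
      nlinarith only [h]
    have hKr32 : K * r ^ 3 ≤ K * r ^ 2 := mul_le_mul_of_nonneg_left hr32 hK0.le
    have hQa : |Q| ≤ |a| / 8 := by linarith only [hQK, hcase]
    have habs1 : |a| ≤ |s₁| + |Q| / 2 := by
      calc |a| = |s₁ + (-(Q/2))| := by rw [hs₁]; ring_nf
        _ ≤ |s₁| + |(-(Q/2))| := abs_add_le _ _
        _ = |s₁| + |Q| / 2 := by rw [abs_neg, abs_div]; norm_num
    have habs2 : |a| ≤ |s₂| + |Q| / 2 := by
      calc |a| = |s₂ + Q/2| := by rw [hs₂]; ring_nf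
        _ ≤ |s₂| + |Q/2| := abs_add_le _ _
        _ = |s₂| + |Q| / 2 := by rw [abs_div]; norm_num
    have hs₁a : |a| / 2 ≤ |s₁| := by linarith
    have hs₂a : |a| / 2 ≤ |s₂| := by linarith
    have hs₁0 : s₁ ≠ 0 := by intro h; rw [h, abs_zero] at hs₁a; linarith
    have hs₂0 : s₂ ≠ 0 := by intro h; rw [h, abs_zero] at hs₂a; linarith
    have hKr3a : K * r ^ 3 ≤ |a| / 8 := by linarith only [hKr32, hQK, hcase]
    have ht₁' : |t₁| ≤ |s₁| / 2 := by linarith only [ht1, hKr3a, hs₁a, ha']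
    have ht₂' : |t₂| ≤ |s₂| / 2 := by linarith only [ht2, hKr3a, hs₂a, ha']
    have E1 := L1 hp1 hp2 hs₁0 ht₁'
    have E2 := L1 hp1 hp2 hs₂0 ht₂'
    have FQ : |Q/2| ≤ |a| / 2 := by rw [abs_div]; simp only [abs_two]; linarith
    have F1 := L1 (t := Q/2) hp1 hp2 ha FQ
    have F2 := L1 (t := -(Q/2)) hp1 hp2 ha (by rwa [abs_neg])
    rw [show a + Q/2 = s₁ from rfl] at F1
    rw [show a + -(Q/2) = s₂ by rw [hs₂]; ring] at F2
    -- rpow comparisons via halving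
    have hs₁3 : |s₁| ^ (p-3) ≤ 4 * |a| ^ (p-3) := by
      refine rpow_ge_half_le ha' hs₁a (by linarith) ?_
      calc (2:ℝ) ^ (-(p-3)) ≤ (2:ℝ) ^ ((2:ℕ):ℝ) := two_rpow_le (by push_cast; linarith)
        _ = 4 := by rw [two_rpow_nat]; norm_num
    have hs₂3 : |s₂| ^ (p-3) ≤ 4 * |a| ^ (p-3) := by
      refine rpow_ge_half_le ha' hs₂a (by linarith) ?_
      calc (2:ℝ) ^ (-(p-3)) ≤ (2:ℝ) ^ ((2:ℕ):ℝ) := two_rpow_le (by push_cast; linarith)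
        _ = 4 := by rw [two_rpow_nat]; norm_num
    have hs₁2 : |s₁| ^ (p-2) ≤ 2 * |a| ^ (p-2) := by
      refine rpow_ge_half_le ha' hs₁a (by linarith) ?_
      calc (2:ℝ) ^ (-(p-2)) ≤ (2:ℝ) ^ ((1:ℕ):ℝ) := two_rpow_le (by push_cast; linarith)
        _ = 2 := by rw [two_rpow_nat]; norm_num
    have hs₂2 : |s₂| ^ (p-2) ≤ 2 * |a| ^ (p-2) := by
      refine rpow_ge_half_le ha' hs₂a (by linarith) ?_
      calc (2:ℝ) ^ (-(p-2)) ≤ (2:ℝ) ^ ((1:ℕ):ℝ) := two_rpow_le (by push_cast; linarith)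
        _ = 2 := by rw [two_rpow_nat]; norm_num
    have hnn1 : (0:ℝ) ≤ |s₁| ^ (p-3) := Real.rpow_nonneg (abs_nonneg _) _
    have hnn1' : (0:ℝ) ≤ |s₂| ^ (p-3) := Real.rpow_nonneg (abs_nonneg _) _
    have hnns12 : (0:ℝ) ≤ |s₁| ^ (p-2) := Real.rpow_nonneg (abs_nonneg _) _
    have hnns22 : (0:ℝ) ≤ |s₂| ^ (p-2) := Real.rpow_nonneg (abs_nonneg _) _
    have ht1sq : t₁ ^ 2 ≤ K ^ 2 * r ^ 6 := by
      have h := pow_le_pow_left₀ (abs_nonneg t₁) ht1 2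
      rw [sq_abs] at h
      calc t₁ ^ 2 ≤ (K * r^3)^2 := h
        _ = K^2 * r^6 := by ring
    have ht2sq : t₂ ^ 2 ≤ K ^ 2 * r ^ 6 := by
      have h := pow_le_pow_left₀ (abs_nonneg t₂) ht2 2
      rw [sq_abs] at h
      calc t₂ ^ 2 ≤ (K * r^3)^2 := h
        _ = K^2 * r^6 := by ring
    have hQsq : Q ^ 2 ≤ K ^ 2 * r ^ 4 := by
      have h := pow_le_pow_left₀ (abs_nonneg Q) hQK 2
      rw [sq_abs] at h
      calc Q ^ 2 ≤ (K * r^2)^2 := h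
        _ = K^2 * r^4 := by ring
    -- term-by-term bounds
    have hr64 : |a| ^ (p-3) * r ^ 6 ≤ |a| ^ (p-3) * r ^ 4 := by
      apply mul_le_mul_of_nonneg_left _ hnn3; nlinarith
    have C1 : 4 * |s₁| ^ (p-3) * t₁ ^ 2 ≤ 16 * K^2 * (|a| ^ (p-3) * r ^ 4) := by
      have h1 : |s₁| ^ (p-3) * t₁ ^ 2 ≤ (4 * |a| ^ (p-3)) * (K ^ 2 * r ^ 6) :=
        mul_le_mul hs₁3 ht1sq (sq_nonneg t₁) (by linarith)
      have h2 : K^2 * (|a| ^ (p-3) * r ^ 6) ≤ K^2 * (|a| ^ (p-3) * r ^ 4) :=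
        mul_le_mul_of_nonneg_left hr64 (sq_nonneg K)
      linarith only [h1, h2]
    have C2 : 4 * |s₂| ^ (p-3) * t₂ ^ 2 ≤ 16 * K^2 * (|a| ^ (p-3) * r ^ 4) := by
      have h1 : |s₂| ^ (p-3) * t₂ ^ 2 ≤ (4 * |a| ^ (p-3)) * (K ^ 2 * r ^ 6) :=
        mul_le_mul hs₂3 ht2sq (sq_nonneg t₂) (by linarith)
      have h2 : K^2 * (|a| ^ (p-3) * r ^ 6) ≤ K^2 * (|a| ^ (p-3) * r ^ 4) :=
        mul_le_mul_of_nonneg_left hr64 (sq_nonneg K)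
      linarith only [h1, h2]
    have hlin1 : |(p - 1) * |s₁| ^ (p-2) * t₁| ≤ 2 * K * (|a| ^ (p-2) * r ^ 3) := by
      rw [abs_mul, abs_mul, abs_of_nonneg (by linarith : (0:ℝ) ≤ p - 1),
        abs_of_nonneg hnns12]
      have h1 : |s₁| ^ (p-2) * |t₁| ≤ (2 * |a| ^ (p-2)) * (K * r ^ 3) :=
        mul_le_mul hs₁2 ht1 (abs_nonneg t₁) (by linarith)
      rw [mul_assoc]
      calc (p-1) * (|s₁| ^ (p-2) * |t₁|) ≤ 1 * (|s₁| ^ (p-2) * |t₁|) :=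
            mul_le_mul_of_nonneg_right (by linarith) (mul_nonneg hnns12 (abs_nonneg t₁))
        _ = |s₁| ^ (p-2) * |t₁| := one_mul _
        _ ≤ (2 * |a| ^ (p-2)) * (K * r ^ 3) := h1
        _ = 2 * K * (|a| ^ (p-2) * r ^ 3) := by ring
    have hlin2 : |(p - 1) * |s₂| ^ (p-2) * t₂| ≤ 2 * K * (|a| ^ (p-2) * r ^ 3) := by
      rw [abs_mul, abs_mul, abs_of_nonneg (by linarith : (0:ℝ) ≤ p - 1),
        abs_of_nonneg hnns22]
      have h1 : |s₂| ^ (p-2) * |t₂| ≤ (2 * |a| ^ (p-2)) * (K * r ^ 3) :=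
        mul_le_mul hs₂2 ht2 (abs_nonneg t₂) (by linarith)
      rw [mul_assoc]
      calc (p-1) * (|s₂| ^ (p-2) * |t₂|) ≤ 1 * (|s₂| ^ (p-2) * |t₂|) :=
            mul_le_mul_of_nonneg_right (by linarith) (mul_nonneg hnns22 (abs_nonneg t₂))
        _ = |s₂| ^ (p-2) * |t₂| := one_mul _
        _ ≤ (2 * |a| ^ (p-2)) * (K * r ^ 3) := h1
        _ = 2 * K * (|a| ^ (p-2) * r ^ 3) := by ring
    have CF0 : |a| ^ (p-3) * Q^2 ≤ |a| ^ (p-3) * (K^2 * r^4) :=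
      mul_le_mul_of_nonneg_left hQsq hnn3
    have CF1 : 4 * |a| ^ (p-3) * (Q/2) ^ 2 ≤ K ^ 2 * (|a| ^ (p-3) * r ^ 4) := by
      linarith only [CF0]
    have CF2 : 4 * |a| ^ (p-3) * (-(Q/2)) ^ 2 ≤ K ^ 2 * (|a| ^ (p-3) * r ^ 4) := by
      linarith only [CF0]
    -- triangle inequality
    have hN : |Jp p (s₁ + t₁) + Jp p (-(s₂ + t₂)) - (p - 1) * |a| ^ (p - 2) * Q|
        ≤ 34 * K^2 * (|a| ^ (p-3) * r ^ 4) + 4 * K * (|a| ^ (p-2) * r ^ 3) := by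
      rw [jp_odd]
      have e : Jp p (s₁ + t₁) + -Jp p (s₂ + t₂) - (p - 1) * |a| ^ (p - 2) * Q
          = (Jp p (s₁ + t₁) - Jp p s₁ - (p - 1) * |s₁| ^ (p-2) * t₁)
            + ((p - 1) * |s₁| ^ (p-2) * t₁)
            - ((Jp p (s₂ + t₂) - Jp p s₂ - (p - 1) * |s₂| ^ (p-2) * t₂)
            + ((p - 1) * |s₂| ^ (p-2) * t₂))
            + (Jp p s₁ - Jp p a - (p - 1) * |a| ^ (p - 2) * (Q/2))
            - (Jp p s₂ - Jp p a - (p - 1) * |a| ^ (p - 2) * (-(Q/2))) := by ring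
      rw [e]
      calc _ ≤ _ := abs_six
        _ ≤ 34 * K^2 * (|a| ^ (p-3) * r ^ 4) + 4 * K * (|a| ^ (p-2) * r ^ 3) := by
          linarith only [E1, E2, F1, F2, hlin1, hlin2, C1, C2, CF1, CF2]
    -- convert to the budget
    have haB : |a| ^ (p-3) * r ^ 4 ≤ |a| ^ (p-2-β) * r ^ (2 + 2*β) := by
      have step1 : |a| ^ (p-3) = |a| ^ (p-2-β) * |a| ^ (β-1) := by
        rw [← Real.rpow_add ha']; ring_nf
      have hra : r ^ 2 ≤ |a| := by
        have h := mul_nonneg (by linarith : (0:ℝ) ≤ K - 1) hr2.le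
        nlinarith only [h, hcase]
      have step2 : |a| ^ (β-1) ≤ ((r^2:ℝ)) ^ (β-1) :=
        Real.rpow_le_rpow_of_nonpos hr2 hra (by linarith)
      have step3 : ((r^2:ℝ)) ^ (β-1) * r ^ 4 = r ^ (2 + 2*β) := by
        rw [rpow_sq_mul hr0, show (r:ℝ)^4 = r ^ ((4:ℕ):ℝ) by rw [Real.rpow_natCast],
          ← Real.rpow_add hr0]
        norm_num; ring_nf
      calc |a| ^ (p-3) * r ^ 4 = |a| ^ (p-2-β) * (|a| ^ (β-1) * r ^ 4) := by
            rw [step1]; ring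
        _ ≤ |a| ^ (p-2-β) * (((r^2:ℝ)) ^ (β-1) * r ^ 4) := by
            apply mul_le_mul_of_nonneg_left _ hann
            apply mul_le_mul_of_nonneg_right step2 (by positivity)
        _ = |a| ^ (p-2-β) * r ^ (2 + 2*β) := by rw [step3]
    have haB2 : |a| ^ (p-2) * r ^ 3 ≤ K * (|a| ^ (p-2-β) * r ^ (2 + 2*β)) := by
      have step1 : |a| ^ (p-2) = |a| ^ (p-2-β) * |a| ^ β := by
        rw [← Real.rpow_add ha']; ring_nf
      have step2 : |a| ^ β ≤ K ^ β * r ^ β := by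
        calc |a| ^ β ≤ (K * r) ^ β := Real.rpow_le_rpow (abs_nonneg a) haK hβ0.le
          _ = K ^ β * r ^ β := Real.mul_rpow hK0.le hr0.le
      have step3 : K ^ β ≤ K := by
        calc K ^ β ≤ K ^ (1:ℝ) := Real.rpow_le_rpow_of_exponent_le hK (by linarith)
          _ = K := Real.rpow_one K
      have step4 : r ^ β * r ^ 3 = r ^ (β + 3) := by
        rw [show (r:ℝ)^3 = r ^ ((3:ℕ):ℝ) by rw [Real.rpow_natCast], ← Real.rpow_add hr0]
        norm_num
      have step5 : r ^ (β+3) ≤ r ^ (2 + 2*β) :=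
        Real.rpow_le_rpow_of_exponent_ge hr0 hr1.le (by linarith)
      have hrbnn : (0:ℝ) ≤ r ^ β := Real.rpow_nonneg hr0.le β
      have hKbnn : (0:ℝ) ≤ K ^ β := Real.rpow_nonneg hK0.le β
      calc |a| ^ (p-2) * r ^ 3 = |a| ^ (p-2-β) * (|a| ^ β * r ^ 3) := by rw [step1]; ring
        _ ≤ |a| ^ (p-2-β) * ((K ^ β * r ^ β) * r ^ 3) := by
            apply mul_le_mul_of_nonneg_left _ hann
            exact mul_le_mul_of_nonneg_right step2 hr3.le
        _ = |a| ^ (p-2-β) * (K ^ β * (r ^ β * r ^ 3)) := by ring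
        _ ≤ |a| ^ (p-2-β) * (K * r ^ (2 + 2*β)) := by
            apply mul_le_mul_of_nonneg_left _ hann
            rw [step4]
            exact mul_le_mul step3 step5 (Real.rpow_pos_of_pos hr0 _).le (by linarith)
        _ = K * (|a| ^ (p-2-β) * r ^ (2 + 2*β)) := by ring
    calc |Jp p (a + Q / 2 + t₁) + Jp p (-(a - Q / 2 + t₂)) - (p - 1) * |a| ^ (p - 2) * Q|
        ≤ 34 * K^2 * (|a| ^ (p-3) * r ^ 4) + 4 * K * (|a| ^ (p-2) * r ^ 3) := hN
      _ ≤ 34 * K^2 * (|a| ^ (p-2-β) * r ^ (2+2*β)) + 4 * K * (K * (|a| ^ (p-2-β) * r ^ (2+2*β))) := by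
          have h1 := mul_le_mul_of_nonneg_left haB (by positivity : (0:ℝ) ≤ 34 * K^2)
          have h2 := mul_le_mul_of_nonneg_left haB2 (by positivity : (0:ℝ) ≤ 4 * K)
          linarith only [h1, h2, hN]
      _ ≤ 208 * K ^ 2 * ((|a + Q| ^ (p - 2 - β) + |a| ^ (p - 2 - β)) * r ^ (2 + 2 * β)) := by
          have g1 : (0:ℝ) ≤ K^2 * (|a + Q| ^ (p-2-β) * r ^ (2+2*β)) :=
            mul_nonneg (sq_nonneg K) (mul_nonneg haQnn hrb.le)
          have g2 : (0:ℝ) ≤ K^2 * (|a| ^ (p-2-β) * r ^ (2+2*β)) :=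
            mul_nonneg (sq_nonneg K) (mul_nonneg hann hrb.le)
          linarith only [g1, g2]
  · -- Case II : |a| < 8 K r²
    have habs2 : |Q/2| ≤ K * r^2 / 2 := by rw [abs_div]; simp only [abs_two]; linarith
    have hr32 : r ^ 3 ≤ r ^ 2 := by
      have h := mul_nonneg (by linarith : (0:ℝ) ≤ 1 - r) (pow_pos hr0 2).le
      nlinarith only [h]
    have hKr32 : K * r ^ 3 ≤ K * r ^ 2 := mul_le_mul_of_nonneg_left hr32 hK0.le
    have hd1 : |a + Q/2 + t₁| ≤ 10 * K * r ^ 2 := by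
      calc |a + Q/2 + t₁| ≤ |a + Q/2| + |t₁| := abs_add_le _ _
        _ ≤ |a| + |Q/2| + |t₁| := by linarith [abs_add_le a (Q/2)]
        _ ≤ 10 * K * r ^ 2 := by linarith only [hcase, habs2, ht1, hKr32, mul_pos hK0 hr2]
    have hd2 : |-(a - Q/2 + t₂)| ≤ 10 * K * r ^ 2 := by
      rw [abs_neg]
      calc |a - Q/2 + t₂| ≤ |a - Q/2| + |t₂| := abs_add_le _ _
        _ ≤ |a| + |Q/2| + |t₂| := by linarith [abs_sub a (Q/2)]
        _ ≤ 10 * K * r ^ 2 := by linarith only [hcase, habs2, ht2, hKr32, mul_pos hK0 hr2]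
    have hX0 : (0:ℝ) < 10 * K * r ^ 2 := by positivity
    have hJ1 : |Jp p (a + Q/2 + t₁)| ≤ (10 * K * r ^ 2) ^ (p-1) := by
      calc |Jp p (a + Q/2 + t₁)| ≤ |a + Q/2 + t₁| ^ (p-1) := abs_jp_le hp1 _
        _ ≤ (10 * K * r ^ 2) ^ (p-1) :=
          Real.rpow_le_rpow (abs_nonneg _) hd1 (by linarith)
    have hJ2 : |Jp p (-(a - Q/2 + t₂))| ≤ (10 * K * r ^ 2) ^ (p-1) := by
      calc |Jp p (-(a - Q/2 + t₂))| ≤ |(-(a - Q/2 + t₂))| ^ (p-1) := abs_jp_le hp1 _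
        _ ≤ (10 * K * r ^ 2) ^ (p-1) :=
          Real.rpow_le_rpow (abs_nonneg _) hd2 (by linarith)
    -- middle term
    have hmid : |(p - 1) * |a| ^ (p - 2) * Q| ≤ 8 * K ^ 2 * (|a| ^ (p-2-β) * r ^ (2+2*β)) := by
      have step1 : |a| ^ (p-2) = |a| ^ (p-2-β) * |a| ^ β := by
        rw [← Real.rpow_add ha']; ring_nf
      have step2 : |a| ^ β ≤ (8*K) ^ β * ((r^2:ℝ)) ^ β := by
        calc |a| ^ β ≤ (8 * K * r ^ 2) ^ β :=
              Real.rpow_le_rpow (abs_nonneg a) hcase.le hβ0.le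
          _ = (8*K) ^ β * ((r^2:ℝ)) ^ β := Real.mul_rpow (by positivity) hr2.le
      have step3 : (8*K:ℝ) ^ β ≤ 8 * K := by
        calc (8*K:ℝ) ^ β ≤ (8*K:ℝ) ^ (1:ℝ) :=
              Real.rpow_le_rpow_of_exponent_le (by linarith) (by linarith)
          _ = 8 * K := Real.rpow_one _
      have step4 : ((r^2:ℝ)) ^ β * r ^ 2 = r ^ (2 + 2*β) := by
        rw [rpow_sq_mul hr0, show (r:ℝ)^2 = r ^ ((2:ℕ):ℝ) by rw [Real.rpow_natCast],
          ← Real.rpow_add hr0]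
        norm_num; ring_nf
      have hr2b : (0:ℝ) ≤ ((r^2:ℝ)) ^ β := Real.rpow_nonneg hr2.le β
      rw [abs_mul, abs_mul, abs_of_nonneg (by linarith : (0:ℝ) ≤ p - 1),
        abs_of_nonneg hnn2]
      calc (p-1) * |a| ^ (p-2) * |Q| ≤ 1 * (|a| ^ (p-2) * |Q|) := by
            rw [mul_assoc]
            exact mul_le_mul_of_nonneg_right (by linarith only [hp2])
              (mul_nonneg hnn2 (abs_nonneg Q))
        _ ≤ |a| ^ (p-2) * (K * r ^ 2) := by
            rw [one_mul]
            exact mul_le_mul_of_nonneg_left hQK hnn2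
        _ = |a| ^ (p-2-β) * (|a| ^ β * (K * r ^ 2)) := by rw [step1]; ring
        _ ≤ |a| ^ (p-2-β) * (((8*K) ^ β * ((r^2:ℝ)) ^ β) * (K * r ^ 2)) := by
            apply mul_le_mul_of_nonneg_left _ hann
            apply mul_le_mul_of_nonneg_right step2 (by positivity)
        _ ≤ |a| ^ (p-2-β) * ((8 * K * ((r^2:ℝ)) ^ β) * (K * r ^ 2)) := by
            apply mul_le_mul_of_nonneg_left _ hann
            apply mul_le_mul_of_nonneg_right _ (by positivity)
            exact mul_le_mul_of_nonneg_right step3 hr2b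
        _ = 8 * K ^ 2 * (|a| ^ (p-2-β) * (((r^2:ℝ)) ^ β * r ^ 2)) := by ring
        _ = 8 * K ^ 2 * (|a| ^ (p-2-β) * r ^ (2 + 2*β)) := by rw [step4]
    -- small positive base for the budget
    obtain ⟨m, hm0, hmle, hmS⟩ : ∃ m : ℝ, 0 < m ∧ m ≤ 10*K*r^2 ∧
        m ^ (p-2-β) ≤ |a+Q| ^ (p-2-β) + |a| ^ (p-2-β) := by
      rcases eq_or_ne (a + Q) 0 with h0 | h0
      · refine ⟨|a|, ha', ?_, by linarith⟩
        have haQ : a = -Q := by linarith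
        rw [haQ, abs_neg]
        linarith only [hQK, mul_pos hK0 hr2]
      · refine ⟨|a+Q|, abs_pos.2 h0, ?_, by linarith⟩
        calc |a+Q| ≤ |a| + |Q| := abs_add_le _ _
          _ ≤ 10*K*r^2 := by linarith only [hcase, hQK, mul_pos hK0 hr2]
    have hJB : (10 * K * r ^ 2) ^ (p-1) ≤ 100 * K^2 * (m ^ (p-2-β) * r ^ (2+2*β)) := by
      have e1 : (10 * K * r ^ 2) ^ (p-1)
          = (10 * K * r ^ 2) ^ (p-2-β) * (10 * K * r ^ 2) ^ (1+β) := by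
        rw [← Real.rpow_add hX0]; ring_nf
      have e2 : (10 * K * r ^ 2) ^ (p-2-β) ≤ m ^ (p-2-β) :=
        Real.rpow_le_rpow_of_nonpos hm0 hmle (by linarith)
      have e3 : (10 * K * r ^ 2) ^ (1+β) ≤ 100 * K^2 * r ^ (2+2*β) := by
        have f1 : (10 * K * r ^ 2) ^ (1+β) = (10*K:ℝ) ^ (1+β) * ((r^2:ℝ)) ^ (1+β) :=
          Real.mul_rpow (by positivity) hr2.le
        have f2 : (10*K:ℝ) ^ (1+β) ≤ (10*K:ℝ) ^ ((2:ℕ):ℝ) :=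
          Real.rpow_le_rpow_of_exponent_le (by linarith) (by push_cast; linarith)
        have f3 : (10*K:ℝ) ^ ((2:ℕ):ℝ) = 100 * K^2 := by
          rw [Real.rpow_natCast]; ring
        have f4 : ((r^2:ℝ)) ^ (1+β) = r ^ (2+2*β) := by
          rw [rpow_sq_mul hr0]; ring_nf
        rw [f1, f4]
        apply mul_le_mul_of_nonneg_right _ hrb.le
        rw [← f3]; exact f2
      calc (10 * K * r ^ 2) ^ (p-1)
          = (10 * K * r ^ 2) ^ (p-2-β) * (10 * K * r ^ 2) ^ (1+β) := e1
        _ ≤ m ^ (p-2-β) * (100 * K^2 * r ^ (2+2*β)) := by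
            apply mul_le_mul e2 e3 (Real.rpow_pos_of_pos hX0 _).le
              (Real.rpow_nonneg hm0.le _)
        _ = 100 * K^2 * (m ^ (p-2-β) * r ^ (2+2*β)) := by ring
    have tri := abs_three (x1 := Jp p (a + Q / 2 + t₁)) (x2 := Jp p (-(a - Q / 2 + t₂)))
      (x3 := (p - 1) * |a| ^ (p - 2) * Q)
    have hmnn : (0:ℝ) ≤ m ^ (p-2-β) := Real.rpow_nonneg hm0.le _
    have hfin1 : m ^ (p-2-β) * r ^ (2+2*β)
        ≤ (|a + Q| ^ (p - 2 - β) + |a| ^ (p - 2 - β)) * r ^ (2+2*β) :=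
      mul_le_mul_of_nonneg_right hmS hrb.le
    have hfin2 : |a| ^ (p-2-β) * r ^ (2+2*β)
        ≤ (|a + Q| ^ (p - 2 - β) + |a| ^ (p - 2 - β)) * r ^ (2+2*β) := by
      apply mul_le_mul_of_nonneg_right _ hrb.le
      linarith
    calc |Jp p (a + Q / 2 + t₁) + Jp p (-(a - Q / 2 + t₂)) - (p - 1) * |a| ^ (p - 2) * Q|
        ≤ |Jp p (a + Q / 2 + t₁)| + |Jp p (-(a - Q / 2 + t₂))|
          + |(p - 1) * |a| ^ (p - 2) * Q| := tri
      _ ≤ 200 * K^2 * (m ^ (p-2-β) * r ^ (2+2*β))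
          + 8 * K ^ 2 * (|a| ^ (p-2-β) * r ^ (2+2*β)) := by
          have g1 := mul_le_mul_of_nonneg_left hJB (by norm_num : (0:ℝ) ≤ 2)
          linarith only [hJ1, hJ2, hmid, g1, hJB]
      _ ≤ 208 * K ^ 2 * ((|a + Q| ^ (p - 2 - β) + |a| ^ (p - 2 - β)) * r ^ (2 + 2 * β)) := by
          have g1 := mul_le_mul_of_nonneg_left hfin1 (by positivity : (0:ℝ) ≤ 200 * K^2)
          have g2 := mul_le_mul_of_nonneg_left hfin2 (by positivity : (0:ℝ) ≤ 8 * K^2)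
          linarith only [g1, g2]

lemma vec2_eq {d : ℕ} (y : Euc d) : ![y, y] = fun _ : Fin 2 => y := by
  funext i; fin_cases i <;> rfl

lemma cons_self {d k : ℕ} (y : Euc d) :
    (Fin.cons y (fun _ : Fin k => y) : Fin (k+1) → Euc d) = fun _ => y := by
  funext i
  refine Fin.cases ?_ ?_ i <;> simp

/-- Bound on iterated derivatives at interior points, applied to `(y,…,y)`. -/
lemma iFD_bound {d : ℕ} {φ : Euc d → ℝ} {x z : Euc d} {R M : ℝ}
    (hφ : C4bOn φ (ball x R) M) {k : ℕ} (hk : k ≤ 4) (hz : z ∈ ball x R) (y : Euc d) :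
    |iteratedFDeriv ℝ k φ z (fun _ => y)| ≤ M * ‖y‖ ^ k := by
  have h1 : iteratedFDerivWithin ℝ k φ (ball x R) z = iteratedFDeriv ℝ k φ z :=
    iteratedFDerivWithin_of_isOpen k isOpen_ball hz
  have h2 := hφ.2 k hk z hz
  rw [h1] at h2
  calc |iteratedFDeriv ℝ k φ z (fun _ => y)|
      ≤ ‖iteratedFDeriv ℝ k φ z‖ * ∏ _i : Fin k, ‖y‖ :=
        (iteratedFDeriv ℝ k φ z).le_opNorm _
    _ = ‖iteratedFDeriv ℝ k φ z‖ * ‖y‖ ^ k := by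
        rw [Finset.prod_const, Finset.card_univ, Fintype.card_fin]
    _ ≤ M * ‖y‖ ^ k := mul_le_mul_of_nonneg_right h2 (by positivity)

/-- Third order Taylor expansion with fourth-order error bound. -/
lemma taylor3 {d : ℕ} {φ : Euc d → ℝ} {x : Euc d} {R M : ℝ} (hR0 : 0 < R)
    (hφ : C4bOn φ (ball x R) M) (y : Euc d) (hy : ‖y‖ < R) :
    |φ (x + y) - φ x - fderiv ℝ φ x y - D2 φ x y y / 2
        - iteratedFDeriv ℝ 3 φ x (fun _ => y) / 6| ≤ M * ‖y‖ ^ 4 := by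
  set s : Set (Euc d) := ball x R with hsdef
  have hs : IsOpen s := isOpen_ball
  have hxs : x ∈ s := mem_ball_self hR0
  have H : HasFTaylorSeriesUpToOn 4 φ (ftaylorSeriesWithin ℝ φ s) s :=
    hφ.1.ftaylorSeriesWithin hs.uniqueDiffOn
  set γ : ℝ → Euc d := fun t => x + t • y with hγ
  have hγmem : ∀ t ∈ Set.Icc (0:ℝ) 1, γ t ∈ s := by
    intro t ht
    rw [hsdef, mem_ball, dist_eq_norm]
    have : ‖γ t - x‖ = |t| * ‖y‖ := by rw [hγ]; simp [norm_smul]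
    rw [this]
    calc |t| * ‖y‖ ≤ 1 * ‖y‖ := by
          apply mul_le_mul_of_nonneg_right _ (norm_nonneg y)
          rw [abs_le]; exact ⟨by linarith [ht.1], ht.2⟩
      _ < R := by rw [one_mul]; exact hy
  set g : ℕ → ℝ → ℝ := fun k t => iteratedFDerivWithin ℝ k φ s (γ t) (fun _ => y) with hg
  have hM0 : 0 ≤ M := le_trans (norm_nonneg _) (hφ.2 0 (by norm_num) x hxs)
  -- derivative of g k is g (k+1)
  have hgderiv : ∀ k : ℕ, k < 4 → ∀ t ∈ Set.Icc (0:ℝ) 1, HasDerivAt (g k) (g (k+1) t) t := by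
    intro k hk t ht
    have hmem := hγmem t ht
    have h1 : HasFDerivWithinAt (fun z => ftaylorSeriesWithin ℝ φ s z k)
        ((ftaylorSeriesWithin ℝ φ s (γ t) (k+1)).curryLeft) s (γ t) :=
      H.fderivWithin k (by
        have h1 : ((k : ℕ∞) : WithTop ℕ∞) < ((4 : ℕ∞) : WithTop ℕ∞) := by
          rw [WithTop.coe_lt_coe]; exact_mod_cast hk
        simpa using h1) (γ t) hmem
    have h2 := h1.hasFDerivAt (hs.mem_nhds hmem)
    have h3 : HasDerivAt γ y t := by
      simpa [hγ] using ((hasDerivAt_id t).smul_const y).const_add x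
    have h4 := h2.comp_hasDerivAt t h3
    have h5 := ((ContinuousMultilinearMap.apply ℝ (fun _ : Fin k => Euc d) ℝ
        (fun _ => y)).hasFDerivAt.comp_hasDerivAt t h4)
    have h6 : (ContinuousMultilinearMap.apply ℝ (fun _ : Fin k => Euc d) ℝ (fun _ => y))
        ((ftaylorSeriesWithin ℝ φ s (γ t) (k+1)).curryLeft y) = g (k+1) t := by
      show (ftaylorSeriesWithin ℝ φ s (γ t) (k+1)).curryLeft y (fun _ => y) = _
      rw [ContinuousMultilinearMap.curryLeft_apply, cons_self]
      rfl
    rw [h6] at h5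
    exact h5
  -- bound on g k
  have hgbound : ∀ k : ℕ, k ≤ 4 → ∀ t ∈ Set.Icc (0:ℝ) 1, |g k t| ≤ M * ‖y‖ ^ k := by
    intro k hk t ht
    have h2 := hφ.2 k hk (γ t) (hγmem t ht)
    calc |g k t| ≤ ‖iteratedFDerivWithin ℝ k φ s (γ t)‖ * ∏ _i : Fin k, ‖y‖ :=
          (iteratedFDerivWithin ℝ k φ s (γ t)).le_opNorm _
      _ = ‖iteratedFDerivWithin ℝ k φ s (γ t)‖ * ‖y‖ ^ k := by
          rw [Finset.prod_const, Finset.card_univ, Fintype.card_fin]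
      _ ≤ M * ‖y‖ ^ k := mul_le_mul_of_nonneg_right h2 (by positivity)
  set Cb : ℝ := M * ‖y‖ ^ 4 with hCb
  have hCb0 : 0 ≤ Cb := by positivity
  -- generic MVT on [0,1]
  have mvt : ∀ (f f' : ℝ → ℝ), (∀ t ∈ Set.Icc (0:ℝ) 1, HasDerivAt f (f' t) t) →
      (∀ t ∈ Set.Icc (0:ℝ) 1, |f' t| ≤ Cb) →
      ∀ T, T ∈ Set.Icc (0:ℝ) 1 → |f T - f 0| ≤ Cb * T := by
    intro f f' hf hb T hT
    have h := Convex.norm_image_sub_le_of_norm_hasDerivWithin_le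
      (fun t ht => (hf t ht).hasDerivWithinAt) (fun t ht => hb t ht) (convex_Icc 0 1)
      (Set.left_mem_Icc.2 zero_le_one) hT
    rw [Real.norm_eq_abs, Real.norm_eq_abs, sub_zero, abs_of_nonneg hT.1] at h
    exact h
  -- level 3
  have lvl3 : ∀ T ∈ Set.Icc (0:ℝ) 1, |g 3 T - g 3 0| ≤ Cb * T := by
    intro T hT
    exact mvt (g 3) (g 4) (hgderiv 3 (by norm_num)) (fun t ht => hgbound 4 le_rfl t ht) T hT
  have lvl3' : ∀ t ∈ Set.Icc (0:ℝ) 1, |g 3 t - g 3 0| ≤ Cb := by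
    intro t ht
    calc |g 3 t - g 3 0| ≤ Cb * t := lvl3 t ht
      _ ≤ Cb * 1 := mul_le_mul_of_nonneg_left ht.2 hCb0
      _ = Cb := mul_one _
  -- level 2
  have lvl2 : ∀ T ∈ Set.Icc (0:ℝ) 1, |g 2 T - g 2 0 - T * g 3 0| ≤ Cb * T := by
    intro T hT
    have h := mvt (fun t => g 2 t - g 2 0 - t * g 3 0) (fun t => g 3 t - g 3 0)
      (fun t ht => by
        have h1 := (hgderiv 2 (by norm_num) t ht).sub_const (g 2 0)
        have h2 := h1.sub ((hasDerivAt_id t).mul_const (g 3 0))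
        exact h2.congr_deriv (by ring))
      (fun t ht => lvl3' t ht) T hT
    simpa using h
  have lvl2' : ∀ t ∈ Set.Icc (0:ℝ) 1, |g 2 t - g 2 0 - t * g 3 0| ≤ Cb := by
    intro t ht
    calc |g 2 t - g 2 0 - t * g 3 0| ≤ Cb * t := lvl2 t ht
      _ ≤ Cb * 1 := mul_le_mul_of_nonneg_left ht.2 hCb0
      _ = Cb := mul_one _
  -- level 1
  have lvl1 : ∀ T ∈ Set.Icc (0:ℝ) 1,
      |g 1 T - g 1 0 - T * g 2 0 - T ^ 2 / 2 * g 3 0| ≤ Cb * T := by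
    intro T hT
    have h := mvt (fun t => g 1 t - g 1 0 - t * g 2 0 - t ^ 2 / 2 * g 3 0)
      (fun t => g 2 t - g 2 0 - t * g 3 0)
      (fun t ht => by
        have h1 := ((hgderiv 1 (by norm_num) t ht).sub_const (g 1 0)).sub
          ((hasDerivAt_id t).mul_const (g 2 0))
        have h2 : HasDerivAt (fun u : ℝ => u ^ 2 / 2 * g 3 0) (t * g 3 0) t := by
          have := ((hasDerivAt_pow 2 t).div_const 2).mul_const (g 3 0)
          exact this.congr_deriv (by push_cast; ring)
        have h3 := h1.sub h2
        exact h3.congr_deriv (by ring))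
      (fun t ht => lvl2' t ht) T hT
    simpa using h
  have lvl1' : ∀ t ∈ Set.Icc (0:ℝ) 1,
      |g 1 t - g 1 0 - t * g 2 0 - t ^ 2 / 2 * g 3 0| ≤ Cb := by
    intro t ht
    calc |g 1 t - g 1 0 - t * g 2 0 - t ^ 2 / 2 * g 3 0| ≤ Cb * t := lvl1 t ht
      _ ≤ Cb * 1 := mul_le_mul_of_nonneg_left ht.2 hCb0
      _ = Cb := mul_one _
  -- level 0
  have lvl0 : |g 0 1 - g 0 0 - 1 * g 1 0 - 1 ^ 2 / 2 * g 2 0 - 1 ^ 3 / 6 * g 3 0| ≤ Cb * 1 := by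
    have h := mvt (fun t => g 0 t - g 0 0 - t * g 1 0 - t ^ 2 / 2 * g 2 0 - t ^ 3 / 6 * g 3 0)
      (fun t => g 1 t - g 1 0 - t * g 2 0 - t ^ 2 / 2 * g 3 0)
      (fun t ht => by
        have h1 := ((hgderiv 0 (by norm_num) t ht).sub_const (g 0 0)).sub
          ((hasDerivAt_id t).mul_const (g 1 0))
        have h2 : HasDerivAt (fun u : ℝ => u ^ 2 / 2 * g 2 0) (t * g 2 0) t := by
          have := ((hasDerivAt_pow 2 t).div_const 2).mul_const (g 2 0)
          exact this.congr_deriv (by push_cast; ring)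
        have h3 : HasDerivAt (fun u : ℝ => u ^ 3 / 6 * g 3 0) (t ^ 2 / 2 * g 3 0) t := by
          have := ((hasDerivAt_pow 3 t).div_const 6).mul_const (g 3 0)
          exact this.congr_deriv (by push_cast; ring)
        have h4 := (h1.sub h2).sub h3
        exact h4.congr_deriv (by ring))
      (fun t ht => lvl1' t ht) 1 (Set.right_mem_Icc.2 zero_le_one)
    simpa using h
  -- evaluate
  have e0 : g 0 1 = φ (x + y) := by
    rw [hg]
    show iteratedFDerivWithin ℝ 0 φ s (γ 1) (fun _ => y) = _
    rw [iteratedFDerivWithin_zero_apply]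
    congr 1
    rw [hγ]; simp
  have e00 : g 0 0 = φ x := by
    rw [hg]
    show iteratedFDerivWithin ℝ 0 φ s (γ 0) (fun _ => y) = _
    rw [iteratedFDerivWithin_zero_apply]
    congr 1
    rw [hγ]; simp
  have hγ0 : γ 0 = x := by rw [hγ]; simp
  have ew : ∀ k : ℕ, g k 0 = iteratedFDeriv ℝ k φ x (fun _ => y) := by
    intro k
    rw [hg]
    show iteratedFDerivWithin ℝ k φ s (γ 0) (fun _ => y) = _
    rw [hγ0, iteratedFDerivWithin_of_isOpen k hs hxs]
  have e1 : g 1 0 = fderiv ℝ φ x y := by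
    rw [ew 1, iteratedFDeriv_one_apply]
  have e2 : g 2 0 = D2 φ x y y := by
    rw [ew 2, D2, vec2_eq]
  have e3 : g 3 0 = iteratedFDeriv ℝ 3 φ x (fun _ => y) := ew 3
  rw [e0, e00, e1, e2, e3] at lvl0
  calc |φ (x + y) - φ x - fderiv ℝ φ x y - D2 φ x y y / 2
        - iteratedFDeriv ℝ 3 φ x (fun _ => y) / 6|
      = |φ (x + y) - φ x - 1 * fderiv ℝ φ x y - 1 ^ 2 / 2 * D2 φ x y y
        - 1 ^ 3 / 6 * iteratedFDeriv ℝ 3 φ x (fun _ => y)| := by ring_nf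
    _ ≤ Cb * 1 := lvl0
    _ = M * ‖y‖ ^ 4 := by rw [hCb, mul_one]

/-- Expansion of `D_y[φ](x)` for `1 < p < 2`, `β ∈ (0,p−1)`, in the
region `|∇φ(x)·y| ≥ η`, with
`Φ(x,y,φ) = |∇φ(x)·ŷ + |y|⟨D²φ(x)ŷ,ŷ⟩|^{p−2−β} + |∇φ(x)·ŷ|^{p−2−β}`, `ŷ = y/|y|`. -/
theorem statement15 {d : ℕ} (p β : ℝ) (hp1 : 1 < p) (hp2 : p < 2)
    (hβ : β ∈ Set.Ioo 0 (p - 1)) (x : Euc d) (R : ℝ)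
    (hR0 : 0 < R) (hR1 : R < 1) (φ : Euc d → ℝ) (M : ℝ) (hφ : C4bOn φ (ball x R) M) :
    ∃ C > 0, ∀ η : ℝ, 0 < η → ∀ y : Euc d, y ∈ ball (0 : Euc d) (R / 2) → y ≠ 0 →
      η ≤ |innP (gradient φ x) y| →
      |DyOp p φ x y -
          (p - 1) / ‖y‖ ^ p * |innP (gradient φ x) y| ^ (p - 2) * D2 φ x y y| ≤
        C * (|innP (gradient φ x) (‖y‖⁻¹ • y) +
                ‖y‖ * D2 φ x (‖y‖⁻¹ • y) (‖y‖⁻¹ • y)| ^ (p - 2 - β) +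
              |innP (gradient φ x) (‖y‖⁻¹ • y)| ^ (p - 2 - β)) * ‖y‖ ^ β := by
  obtain ⟨hβ0, hβ1⟩ := hβ
  have hM0 : 0 ≤ M := le_trans (norm_nonneg _) (hφ.2 0 (by norm_num) x (mem_ball_self hR0))
  set K : ℝ := 2 * M + 2 with hKdef
  have hK1 : (1:ℝ) ≤ K := by rw [hKdef]; linarith
  refine ⟨208 * K ^ 2, by positivity, ?_⟩
  intro η hη y hyball hy0 hηa
  set r : ℝ := ‖y‖ with hrdef
  have hr0 : 0 < r := by rw [hrdef]; exact norm_pos_iff.2 hy0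
  have hyR2 : r < R / 2 := by
    rw [hrdef, ← dist_zero_right]; exact mem_ball.1 hyball
  have hr1 : r < 1 := by linarith
  have hyR : r < R := by linarith
  set A : ℝ := innP (gradient φ x) y with hA
  have hA0 : A ≠ 0 := by
    intro h
    rw [h, abs_zero] at hηa
    linarith
  set Q : ℝ := D2 φ x y y with hQ
  set c3 : ℝ := iteratedFDeriv ℝ 3 φ x (fun _ => y) with hc3
  have hAf : A = fderiv ℝ φ x y := by
    rw [hA]; simp [innP, gradient, InnerProductSpace.toDual_symm_apply]
  -- bounds on A, Q, c3
  have hAb : |A| ≤ K * r := by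
    have h := iFD_bound hφ (k := 1) (by norm_num) (mem_ball_self hR0) y
    rw [iteratedFDeriv_one_apply] at h
    have : |A| ≤ M * r ^ 1 := by rw [hAf]; exact h
    have hKr : M * r ≤ K * r := mul_le_mul_of_nonneg_right (by rw [hKdef]; linarith) hr0.le
    rw [pow_one] at this
    linarith
  have hQb : |Q| ≤ K * r ^ 2 := by
    have h := iFD_bound hφ (k := 2) (by norm_num) (mem_ball_self hR0) y
    have hQ2 : Q = iteratedFDeriv ℝ 2 φ x (fun _ => y) := by rw [hQ, D2, vec2_eq]
    rw [← hQ2] at h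
    have hKr : M * r ^ 2 ≤ K * r ^ 2 :=
      mul_le_mul_of_nonneg_right (by rw [hKdef]; linarith) (by positivity)
    linarith
  have hc3b : |c3| ≤ M * r ^ 3 := by
    have h := iFD_bound hφ (k := 3) (by norm_num) (mem_ball_self hR0) y
    rw [← hc3] at h
    exact h
  -- Taylor expansions
  have T1 := taylor3 hR0 hφ y hyR
  have T2 := taylor3 hR0 hφ (-y) (by rw [norm_neg]; exact hyR)
  have hd2neg : D2 φ x (-y) (-y) = Q := by
    rw [hQ, D2, D2]
    have h1 : ![-y, -y] = fun i : Fin 2 => (-1 : ℝ) • (![y, y] i) := by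
      funext i; fin_cases i <;> simp
    rw [h1, ContinuousMultilinearMap.map_smul_univ]
    simp
  have hc3neg : iteratedFDeriv ℝ 3 φ x (fun _ => -y) = -c3 := by
    rw [hc3]
    have h1 : (fun _ : Fin 3 => -y) = fun i : Fin 3 => (-1 : ℝ) • ((fun _ => y) i) := by
      funext i; simp
    rw [h1, ContinuousMultilinearMap.map_smul_univ]
    simp only [smul_eq_mul, Fin.prod_univ_three]
    norm_num
  rw [hd2neg, hc3neg, map_neg, show x + -y = x - y by abel, norm_neg] at T2
  -- error terms
  set e1 : ℝ := φ (x + y) - φ x - A - Q / 2 - c3 / 6 with he1def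
  set e2 : ℝ := φ (x - y) - φ x + A - Q / 2 + c3 / 6 with he2def
  have he1 : |e1| ≤ M * r ^ 4 := by
    rw [he1def, hAf]
    exact T1
  have he2 : |e2| ≤ M * r ^ 4 := by
    rw [he2def, hAf]
    have heq : φ (x - y) - φ x + fderiv ℝ φ x y - Q / 2 + c3 / 6
        = φ (x - y) - φ x - -(fderiv ℝ φ x) y - Q / 2 - -c3 / 6 := by ring
    rw [heq]
    exact T2
  set t₁ : ℝ := c3 / 6 + e1 with ht₁def
  set t₂ : ℝ := c3 / 6 - e2 with ht₂def
  have hr43 : r ^ 4 ≤ r ^ 3 := by nlinarith [mul_le_mul_of_nonneg_left hr1.le (pow_pos hr0 3).le]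
  have hMr3 : M * r ^ 4 ≤ M * r ^ 3 := mul_le_mul_of_nonneg_left hr43 hM0
  have hr3nn : (0:ℝ) ≤ r ^ 3 := by positivity
  have hMr3nn : (0:ℝ) ≤ M * r ^ 3 := by positivity
  have ht1b : |t₁| ≤ K * r ^ 3 := by
    have h := abs_add_le (c3 / 6) e1
    rw [abs_div, show |(6:ℝ)| = 6 by norm_num] at h
    rw [hKdef]
    linarith only [hc3b, he1, hMr3, hMr3nn, hr3nn, h]
  have ht2b : |t₂| ≤ K * r ^ 3 := by
    have h := abs_sub (c3 / 6) e2
    rw [abs_div, show |(6:ℝ)| = 6 by norm_num] at h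
    rw [hKdef]
    linarith only [hc3b, he2, hMr3, hMr3nn, hr3nn, h]
  have hplus : φ (x + y) - φ x = A + Q / 2 + t₁ := by
    rw [ht₁def, he1def]; ring
  have hminus : φ (x - y) - φ x = -(A - Q / 2 + t₂) := by
    rw [ht₂def, he2def]; ring
  have KEY := key hp1 hp2 hβ0 hβ1 hK1 hr0 hr1 hA0 hAb hQb ht1b ht2b
  rw [← hplus, ← hminus] at KEY
  -- rewrite the goal
  have hrp : (0:ℝ) < r ^ p := Real.rpow_pos_of_pos hr0 p
  set N : ℝ := Jp p (φ (x + y) - φ x) + Jp p (φ (x - y) - φ x)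
    - (p - 1) * |A| ^ (p - 2) * Q with hNdef
  have hL : DyOp p φ x y - (p - 1) / r ^ p * |A| ^ (p - 2) * Q = N / r ^ p := by
    rw [hNdef, DyOp]
    field_simp
    rw [← hrdef]; ring
  have hAr : innP (gradient φ x) (‖y‖⁻¹ • y) = A / r := by
    rw [hA, ← hrdef]
    unfold innP
    rw [real_inner_smul_right]
    unfold r
    field_simp
  have hQr : D2 φ x (‖y‖⁻¹ • y) (‖y‖⁻¹ • y) = r⁻¹ ^ 2 * Q := by
    rw [hQ, ← hrdef, D2, D2]
    have h1 : ![r⁻¹ • y, r⁻¹ • y] = fun i : Fin 2 => r⁻¹ • (![y, y] i) := by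
      funext i; fin_cases i <;> rfl
    rw [h1, ContinuousMultilinearMap.map_smul_univ]
    simp [Fin.prod_univ_two, smul_eq_mul, pow_two]
  have hsum : innP (gradient φ x) (‖y‖⁻¹ • y)
      + ‖y‖ * D2 φ x (‖y‖⁻¹ • y) (‖y‖⁻¹ • y) = (A + Q) / r := by
    rw [hAr, hQr, ← hrdef]
    field_simp
  have habs1 : |(A + Q) / r| ^ (p - 2 - β) = |A + Q| ^ (p - 2 - β) / r ^ (p - 2 - β) := by
    rw [abs_div, abs_of_pos hr0, Real.div_rpow (abs_nonneg _) hr0.le]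
  have habs2 : |A / r| ^ (p - 2 - β) = |A| ^ (p - 2 - β) / r ^ (p - 2 - β) := by
    rw [abs_div, abs_of_pos hr0, Real.div_rpow (abs_nonneg _) hr0.le]
  have habs3 : |N / r ^ p| = |N| / r ^ p := by rw [abs_div, abs_of_pos hrp]
  rw [hL, hsum, hAr, habs3, habs1, habs2, ← add_div]
  have hE : r ^ (2 + 2*β) / r ^ p = r ^ β / r ^ (p - 2 - β) := by
    rw [← Real.rpow_sub hr0, ← Real.rpow_sub hr0]
    ring_nf
  calc |N| / r ^ p
      ≤ (208 * K ^ 2 * ((|A + Q| ^ (p - 2 - β) + |A| ^ (p - 2 - β)) * r ^ (2 + 2*β)))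
        / r ^ p := by gcongr
    _ = 208 * K ^ 2 * ((|A + Q| ^ (p - 2 - β) + |A| ^ (p - 2 - β))
        * (r ^ (2 + 2*β) / r ^ p)) := by ring
    _ = 208 * K ^ 2 * ((|A + Q| ^ (p - 2 - β) + |A| ^ (p - 2 - β))
        * (r ^ β / r ^ (p - 2 - β))) := by rw [hE]
    _ = 208 * K ^ 2 * ((|A + Q| ^ (p - 2 - β) + |A| ^ (p - 2 - β))
        / r ^ (p - 2 - β)) * r ^ β := by ring
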